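/- arXiv:0801.1417 — 2 statements merged into one kernel-verified Lean document; each statement's English description precedes it below -/
import Mathlib

section
/- With ω as above, the restriction of ω to the subgroup I_{2,z} = ⟨c_z, a_z, b_z⟩ (c_z = −id; a_z: f1↦f2↦f3↦f4↦f1 cyclically; b_z: f1↔f2, f3↔f4) is nontrivial, and its kernel equals the subgroup I_3 = ⟨c_x, b_x, a_x²⟩, where c_x: f1↔f3, f2↔f4, b_x: f1↔f2, f3↔f4, a_x² = −id. -/
/-!
`I₂_z` contains `I₃` (as `a_x² = c_z`, `a_z² = c_x`, `b_z = b_x`), `a_z` normalises `I₃` and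
`a_z² ∈ I₃`, so `I₂_z = I₃ ∪ a_z I₃`. The generators of `I₃` permute the coordinate lines by
even permutations while `a_z` induces a 4-cycle, so `ω` vanishes exactly on `I₃`.
-/

/-- The standard basis vectors `f₁, f₂, f₃, f₄` of `ℝ⁴`. -/
noncomputable def f (i : Fin 4) : Fin 4 → ℝ := Pi.single i 1

/-- The `i`-th coordinate line `ℝ·fᵢ` of `ℝ⁴`. -/
noncomputable def line (i : Fin 4) : Submodule ℝ (Fin 4 → ℝ) := Submodule.span ℝ {f i}

/-- `g` permutes the four coordinate lines of `ℝ⁴` according to the permutation `σ`. -/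
noncomputable def PermLines (g : LinearMap.GeneralLinearGroup ℝ (Fin 4 → ℝ))
    (σ : Equiv.Perm (Fin 4)) : Prop :=
  ∀ i, Submodule.map (g.val : (Fin 4 → ℝ) →ₗ[ℝ] (Fin 4 → ℝ)) (line i) = line (σ i)

notation "GL₄" => LinearMap.GeneralLinearGroup ℝ (Fin 4 → ℝ)

section Normalizing

variable {M : Type*} [Group M]

lemma Subgroup.conj_mem_closure_of_conj_mem {T : Set M} {a : M}
    (hT : ∀ t ∈ T, a * t * a⁻¹ ∈ closure T) {k : M} (hk : k ∈ closure T) :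
    a * k * a⁻¹ ∈ closure T := by
  have hle : (closure T).map (MulAut.conj a).toMonoidHom ≤ closure T := by
    rw [MonoidHom.map_closure, closure_le]
    rintro _ ⟨t, ht, rfl⟩
    exact hT t ht
  exact hle ⟨k, hk, rfl⟩

lemma Subgroup.mem_or_mul_mem_of_mem_closure {K : Subgroup M} {a : M} {S : Set M}
    (hconj : ∀ k ∈ K, a * k * a⁻¹ ∈ K) (ha : a * a ∈ K) (hS : ∀ s ∈ S, s ∈ K ∨ a * s ∈ K)
    {g : M} (hg : g ∈ closure S) : g ∈ K ∨ a * g ∈ K := by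
  induction hg using Subgroup.closure_induction with
  | mem s hs => exact hS s hs
  | one => exact .inl K.one_mem
  | mul x y _ _ hx hy =>
    rcases hx with hx | hx <;> rcases hy with hy | hy
    · exact .inl (mul_mem hx hy)
    · refine .inr ?_
      rw [show a * (x * y) = a * x * a⁻¹ * (a * y) by group]
      exact mul_mem (hconj x hx) hy
    · refine .inr ?_
      rw [← mul_assoc]
      exact mul_mem hx hy
    · refine .inl ?_
      rw [show x * y = (a * a)⁻¹ * (a * (a * x) * a⁻¹) * (a * y) by group]
      exact mul_mem (mul_mem (inv_mem ha) (hconj _ hx)) hy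
  | inv x _ hx =>
    rcases hx with hx | hx
    · exact .inl (inv_mem hx)
    · refine .inr ?_
      rw [show a * x⁻¹ = a * (a * x)⁻¹ * a⁻¹ * (a * a) by group]
      exact mul_mem (hconj _ (inv_mem hx)) ha

lemma Subgroup.mem_or_mul_mem_closure_of_conj {a b c : M} (hb : a * b * a⁻¹ = a * a * b)
    (hc : a * c * a⁻¹ = c) {g : M} (hg : g ∈ closure {c, a, b}) :
    g ∈ closure {a * a, b, c} ∨ a * g ∈ closure {a * a, b, c} := by
  have hconj : ∀ t ∈ ({a * a, b, c} : Set M), a * t * a⁻¹ ∈ closure {a * a, b, c} := by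
    rintro t (rfl | rfl | rfl)
    · rw [show a * (a * a) * a⁻¹ = a * a by group]
      exact subset_closure (by simp)
    · rw [hb]
      exact mul_mem (subset_closure (by simp)) (subset_closure (by simp))
    · rw [hc]
      exact subset_closure (by simp)
  refine mem_or_mul_mem_of_mem_closure (fun k => conj_mem_closure_of_conj_mem hconj)
    (subset_closure (by simp)) ?_ hg
  rintro s (rfl | rfl | rfl)
  · exact .inl (subset_closure (by simp))
  · exact .inr (subset_closure (by simp))
  · exact .inl (subset_closure (by simp))

lemma Subgroup.closure_mul_self_le (a b c : M) :
    closure {a * a, b, c} ≤ closure {c, a, b} := by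
  rw [closure_le]
  rintro g (rfl | rfl | rfl)
  · exact mul_mem (subset_closure (by simp)) (subset_closure (by simp))
  all_goals exact subset_closure (by simp)

end Normalizing

lemma line_injective : Function.Injective line := by
  intro i j h
  have hi : f i ∈ line j := h ▸ Submodule.mem_span_singleton_self (f i)
  obtain ⟨c, hc⟩ := Submodule.mem_span_singleton.mp hi
  by_contra hij
  simpa [f, Pi.single_eq_of_ne hij] using congrFun hc i

lemma gl_ext {g h : GL₄} (he : ∀ i, g.val (f i) = h.val (f i)) : g = h :=
  Units.ext <| (Pi.basisFun ℝ (Fin 4)).ext fun i => by simpa [f] using he i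

lemma map_val_mul (g h : GL₄) (L : Submodule ℝ (Fin 4 → ℝ)) :
    L.map (g * h).val = (L.map h.val).map g.val :=
  Submodule.map_comp _ _ _

lemma PermLines.unique {g : GL₄} {σ τ : Equiv.Perm (Fin 4)}
    (hσ : PermLines g σ) (hτ : PermLines g τ) : σ = τ :=
  Equiv.ext fun i => line_injective ((hσ i).symm.trans (hτ i))

lemma PermLines.one : PermLines 1 1 := fun _ => Submodule.map_id _

lemma PermLines.mul {g h : GL₄} {σ τ : Equiv.Perm (Fin 4)}
    (hg : PermLines g σ) (hh : PermLines h τ) : PermLines (g * h) (σ * τ) := fun i => by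
  rw [map_val_mul, hh i, hg (τ i), Equiv.Perm.mul_apply]

lemma PermLines.inv {g : GL₄} {σ : Equiv.Perm (Fin 4)} (hg : PermLines g σ) :
    PermLines g⁻¹ σ⁻¹ := fun i => by
  have hi := hg (σ⁻¹ i)
  simp only [Equiv.Perm.coe_inv, Equiv.apply_symm_apply] at hi
  rw [← hi, ← map_val_mul, inv_mul_cancel]
  exact Submodule.map_id _

lemma permLines_of_apply_eq_smul {g : GL₄} {σ : Equiv.Perm (Fin 4)}
    (h : ∀ i, ∃ c : ℝ, c ≠ 0 ∧ g.val (f i) = c • f (σ i)) : PermLines g σ := fun i => by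
  obtain ⟨c, hc, hgi⟩ := h i
  rw [line, Submodule.map_span, Set.image_singleton, hgi,
    Submodule.span_singleton_smul_eq hc.isUnit]
  rfl

lemma permLines_of_apply_eq {g : GL₄} {σ : Equiv.Perm (Fin 4)}
    (h : ∀ i, g.val (f i) = f (σ i)) : PermLines g σ :=
  permLines_of_apply_eq_smul fun i => ⟨1, one_ne_zero, by rw [one_smul, h]⟩

def evenLinePerm : Subgroup GL₄ where
  carrier := {g | ∃ σ, PermLines g σ ∧ Equiv.Perm.sign σ = 1}
  one_mem' := ⟨1, PermLines.one, map_one _⟩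
  mul_mem' := by
    rintro g h ⟨σ, hg, hσ⟩ ⟨τ, hh, hτ⟩
    exact ⟨σ * τ, hg.mul hh, by rw [map_mul, hσ, hτ, mul_one]⟩
  inv_mem' := by
    rintro g ⟨σ, hg, hσ⟩
    exact ⟨σ⁻¹, hg.inv, by rw [map_inv, hσ, inv_one]⟩

lemma sign_eq_one_of_mem_evenLinePerm {g : GL₄} (hg : g ∈ evenLinePerm)
    {σ : Equiv.Perm (Fin 4)} (hσ : PermLines g σ) : Equiv.Perm.sign σ = 1 := by
  obtain ⟨τ, hτ, hsign⟩ := hg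
  rwa [hσ.unique hτ]

lemma setOf_sign_eq_one_eq {G K : Subgroup GL₄} {a : GL₄} {π : Equiv.Perm (Fin 4)}
    (hKG : K ≤ G) (hK : K ≤ evenLinePerm) (ha : PermLines a π) (hπ : Equiv.Perm.sign π = -1)
    (hG : ∀ g ∈ G, g ∈ K ∨ a * g ∈ K) :
    {g | g ∈ G ∧ ∀ σ, PermLines g σ → Equiv.Perm.sign σ = 1} = (K : Set GL₄) := by
  ext g
  refine ⟨fun ⟨hgG, heven⟩ => (hG g hgG).resolve_right fun hag => ?_,
    fun hgK => ⟨hKG hgK, fun σ => sign_eq_one_of_mem_evenLinePerm (hK hgK)⟩⟩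
  obtain ⟨τ, hτ, hsign⟩ := hK hag
  have hg : PermLines g (π⁻¹ * τ) := by simpa using ha.inv.mul hτ
  have := heven _ hg
  simp [hπ, hsign] at this

/-- The restriction to `I₂_z = ⟨c_z, a_z, b_z⟩` of the homomorphism `ω` (the sign of
the induced permutation of the four coordinate lines) is nontrivial — `a_z` induces an
odd permutation — and its kernel equals the subgroup `I₃ = ⟨cₓ, bₓ, aₓ²⟩`. -/
theorem omega_on_I2z_nontrivial_kernel_I3
    (cx ax bx cz az bz : LinearMap.GeneralLinearGroup ℝ (Fin 4 → ℝ))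
    (hcx1 : cx.val (f 0) = f 2) (hcx2 : cx.val (f 2) = f 0)
    (hcx3 : cx.val (f 1) = f 3) (hcx4 : cx.val (f 3) = f 1)
    (hax1 : ax.val (f 0) = f 1) (hax2 : ax.val (f 1) = -f 0)
    (hax3 : ax.val (f 2) = f 3) (hax4 : ax.val (f 3) = -f 2)
    (hbx1 : bx.val (f 0) = f 1) (hbx2 : bx.val (f 1) = f 0)
    (hbx3 : bx.val (f 2) = f 3) (hbx4 : bx.val (f 3) = f 2)
    (hcz : ∀ i : Fin 4, cz.val (f i) = -f i)
    (haz1 : az.val (f 0) = f 1) (haz2 : az.val (f 1) = f 2)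
    (haz3 : az.val (f 2) = f 3) (haz4 : az.val (f 3) = f 0)
    (hbz1 : bz.val (f 0) = f 1) (hbz2 : bz.val (f 1) = f 0)
    (hbz3 : bz.val (f 2) = f 3) (hbz4 : bz.val (f 3) = f 2) :
    (∃ σ : Equiv.Perm (Fin 4), PermLines az σ ∧ Equiv.Perm.sign σ = -1) ∧
      ({g | g ∈ Subgroup.closure ({cz, az, bz} :
            Set (LinearMap.GeneralLinearGroup ℝ (Fin 4 → ℝ))) ∧
          ∀ σ : Equiv.Perm (Fin 4), PermLines g σ → Equiv.Perm.sign σ = 1} :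
          Set (LinearMap.GeneralLinearGroup ℝ (Fin 4 → ℝ))) =
        ↑(Subgroup.closure ({cx, bx, ax ^ 2} :
            Set (LinearMap.GeneralLinearGroup ℝ (Fin 4 → ℝ)))) := by
  have hax_sq : ax ^ 2 = cz := gl_ext fun i => by fin_cases i <;> simp [sq, *]
  have haz_sq : az * az = cx := gl_ext fun i => by fin_cases i <;> simp [*]
  have hbz : bz = bx := gl_ext fun i => by fin_cases i <;> simp [*]
  have haz_bx : az * bx * az⁻¹ = cx * bx := by
    rw [mul_inv_eq_iff_eq_mul]; exact gl_ext fun i => by fin_cases i <;> simp [*]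
  have haz_cz : az * cz * az⁻¹ = cz := by
    rw [mul_inv_eq_iff_eq_mul]; exact gl_ext fun i => by fin_cases i <;> simp [*]
  have haz : PermLines az (finRotate 4) := permLines_of_apply_eq fun i => by
    fin_cases i <;> assumption
  subst hbz hax_sq haz_sq
  -- now `I₃ = ⟨a_z², b_z, a_x²⟩` and `I₂_z = ⟨a_x², a_z, b_z⟩`
  have hK_even : Subgroup.closure {az * az, bz, ax ^ 2} ≤ evenLinePerm := by
    rw [Subgroup.closure_le]
    rintro g (rfl | rfl | rfl)
    · exact ⟨Equiv.swap 0 2 * Equiv.swap 1 3, permLines_of_apply_eq fun i => by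
        fin_cases i <;> assumption, by decide⟩
    · exact ⟨Equiv.swap 0 1 * Equiv.swap 2 3, permLines_of_apply_eq fun i => by
        fin_cases i <;> assumption, by decide⟩
    · refine ⟨1, permLines_of_apply_eq_smul fun i => ⟨-1, by norm_num, ?_⟩, map_one _⟩
      rw [hcz, neg_one_smul]
      rfl
  exact ⟨⟨finRotate 4, haz, by decide⟩,
    setOf_sign_eq_one_eq (Subgroup.closure_mul_self_le _ _ _) hK_even haz (by decide)
      fun g => Subgroup.mem_or_mul_mem_closure_of_conj haz_bx haz_cz⟩
end

section
/- The subgroup I_3 = ⟨c_x, b_x, −id⟩ of GL(4,R) equals the intersection I_{2,x} ∩ I_{2,y}, where I_{2,x} = ⟨c_x, a_x, b_x⟩ and I_{2,y} = ⟨c_y, a_y, b_y⟩ with c_y: f1↔f2, f3↔f4; a_y: f1↦f3, f3↦−f1, f2↦f4, f4↦−f2; b_y: f1↔f3, f2↔f4; and moreover I_3 has index 2 in I_{2,x}. -/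
/-!
`I₃ = ⟨cₓ, bₓ, −1⟩` is normalized by `aₓ` and by `a_y`, which both square to `−1 ∈ I₃`
(`aₓ` commutes with `cₓ` and anticommutes with `bₓ`; `a_y` commutes with `c_y = bₓ` and anticommutes
with `b_y = cₓ`). Hence `I₂ₓ = I₃ ∪ I₃ aₓ` and `I₂_y = I₃ ∪ I₃ a_y`, so `[I₂ₓ : I₃] = 2` as soon as
`aₓ ∉ I₃`, and `I₂ₓ ∩ I₂_y = I₃` as soon as `aₓ a_y ∉ I₃`. Both non-memberships are detected by the
vector `f₁ + f₂ + f₃ + f₄`, which every element of `I₃` maps to `±` itself while `aₓ` and `aₓ a_y`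
do not.
-/

namespace Subgroup

variable {G : Type*} [Group G]

theorem mem_normalizer_closure_of_conj_mem {s : Set G} {a : G}
    (hconj : ∀ g ∈ s, a * g * a⁻¹ ∈ closure s) (hsq : a * a ∈ closure s) :
    a ∈ normalizer (closure s : Set G) := by
  have hmap : (closure s).map (MulAut.conj a).toMonoidHom ≤ closure s := by
    rw [MonoidHom.map_closure, closure_le]
    rintro _ ⟨g, hg, rfl⟩
    exact hconj g hg
  refine mem_normalizer_iff.2 fun g => ⟨fun hg => hmap (mem_map_of_mem _ hg), fun hg => ?_⟩
  -- conjugating by `a⁻¹` is conjugating by `a`, then by `(a * a)⁻¹`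
  have h := mul_mem (mul_mem (inv_mem hsq) (hmap (mem_map_of_mem _ hg))) hsq
  simpa [mul_assoc] using h

theorem closure_insert_closure_eq {s t : Set G} {a : G} (hst : s ⊆ t)
    (hts : t ⊆ insert (a * a) s) :
    closure (insert a (closure t : Set G)) = closure (insert a s) := by
  have ha : a ∈ closure (insert a s) := subset_closure (Set.mem_insert a s)
  have ht : closure t ≤ closure (insert a s) := by
    refine (closure_le _).2 fun g hg => ?_
    rcases hts hg with rfl | hg
    exacts [mul_mem ha ha, subset_closure (Set.mem_insert_of_mem a hg)]
  exact le_antisymm ((closure_le _).2 (Set.insert_subset ha ht))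
    (closure_mono (Set.insert_subset_insert (hst.trans subset_closure)))

theorem mem_closure_insert_iff_of_mem_normalizer {N : Subgroup G} {a g : G}
    (ha : a ∈ normalizer (N : Set G)) (hsq : a * a ∈ N) :
    g ∈ closure (insert a (N : Set G)) ↔ g ∈ N ∨ g * a ∈ N := by
  have conj_mem : ∀ n ∈ N, a⁻¹ * n * a ∈ N := fun n hn => (mem_normalizer_iff''.1 ha n).1 hn
  refine ⟨fun hg => ?_, ?_⟩
  · induction hg using closure_induction with
    | mem x hx =>
      rcases hx with rfl | hx
      exacts [Or.inr hsq, Or.inl hx]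
    | one => exact Or.inl N.one_mem
    | mul x y _ _ hx hy =>
      rcases hx with hx | hx <;> rcases hy with hy | hy
      · exact Or.inl (mul_mem hx hy)
      · exact Or.inr (by simpa [mul_assoc] using mul_mem hx hy)
      · exact Or.inr (by simpa [mul_assoc] using mul_mem hx (conj_mem y hy))
      · refine Or.inl ?_
        have h := mul_mem (mul_mem hx (conj_mem _ hy)) (inv_mem hsq)
        simpa [mul_assoc] using h
    | inv x _ hx =>
      rcases hx with hx | hx
      · exact Or.inl (inv_mem hx)
      · refine Or.inr ?_
        have h := mul_mem hsq (conj_mem _ (inv_mem hx))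
        simpa [mul_assoc] using h
  · rintro (hg | hg)
    · exact subset_closure (Set.mem_insert_of_mem a hg)
    · have h := mul_mem (subset_closure (Set.mem_insert_of_mem a hg))
        (inv_mem (subset_closure (Set.mem_insert a (N : Set G))))
      simpa using h

theorem relIndex_closure_insert_eq_two {N : Subgroup G} {a : G}
    (ha : a ∈ normalizer (N : Set G)) (hsq : a * a ∈ N) (haN : a ∉ N) :
    N.relIndex (closure (insert a (N : Set G))) = 2 :=
  relIndex_eq_two_iff_exists_notMem_and.2 ⟨a, subset_closure (Set.mem_insert a _), haN,
    fun _ hb => ((mem_closure_insert_iff_of_mem_normalizer ha hsq).1 hb).symm⟩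

theorem closure_insert_inf_closure_insert_eq {N : Subgroup G} {a a' : G}
    (ha : a ∈ normalizer (N : Set G)) (hsq : a * a ∈ N)
    (ha' : a' ∈ normalizer (N : Set G)) (hsq' : a' * a' ∈ N) (hmul : a * a' ∉ N) :
    closure (insert a (N : Set G)) ⊓ closure (insert a' (N : Set G)) = N := by
  refine le_antisymm (fun g hg => ?_) (le_inf ?_ ?_)
  · obtain ⟨hg, hg'⟩ := mem_inf.1 hg
    rcases (mem_closure_insert_iff_of_mem_normalizer ha hsq).1 hg with hg | hga
    · exact hg
    rcases (mem_closure_insert_iff_of_mem_normalizer ha' hsq').1 hg' with hg' | hga'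
    · exact hg'
    refine absurd ?_ hmul
    have h := mul_mem hsq (mul_mem (inv_mem hga) hga')
    simpa [mul_assoc] using h
  all_goals exact fun n hn => subset_closure (Set.mem_insert_of_mem _ hn)

theorem closure_eq_inf_and_relIndex_eq_two_of_relations {a a' b c z : G}
    (ha : a * a = z) (hac : a * c = c * a) (hab : a * b = z * b * a)
    (ha' : a' * a' = z) (ha'c : a' * c = z * c * a') (ha'b : a' * b = b * a')
    (haN : a ∉ closure {c, b, z}) (haa' : a * a' ∉ closure {c, b, z}) :
    closure {c, b, z} = closure {c, a, b} ⊓ closure {b, a', c} ∧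
      (closure {c, b, z}).relIndex (closure {c, a, b}) = 2 := by
  set N := closure ({c, b, z} : Set G)
  have hc : c ∈ N := subset_closure (by simp)
  have hb : b ∈ N := subset_closure (by simp)
  have hz : z ∈ N := subset_closure (by simp)
  have hsq : a * a ∈ N := ha ▸ hz
  have hsq' : a' * a' ∈ N := ha' ▸ hz
  have hnorm : a ∈ normalizer (N : Set G) := by
    refine mem_normalizer_closure_of_conj_mem ?_ hsq
    simp only [Set.forall_mem_insert, Set.mem_singleton_iff, forall_eq]
    refine ⟨?_, ?_, ?_⟩
    · rwa [hac, mul_inv_cancel_right]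
    · rw [hab, mul_inv_cancel_right]; exact mul_mem hz hb
    · rwa [show a * z * a⁻¹ = z by rw [← ha]; group]
  have hnorm' : a' ∈ normalizer (N : Set G) := by
    refine mem_normalizer_closure_of_conj_mem ?_ hsq'
    simp only [Set.forall_mem_insert, Set.mem_singleton_iff, forall_eq]
    refine ⟨?_, ?_, ?_⟩
    · rw [ha'c, mul_inv_cancel_right]; exact mul_mem hz hc
    · rwa [ha'b, mul_inv_cancel_right]
    · rwa [show a' * z * a'⁻¹ = z by rw [← ha']; group]
  have hX : closure (insert a (N : Set G)) = closure {c, a, b} := by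
    rw [Set.insert_comm]
    exact closure_insert_closure_eq (by simp [Set.insert_subset_iff])
      (by simp [Set.insert_subset_iff, ha])
  have hY : closure (insert a' (N : Set G)) = closure {b, a', c} := by
    rw [Set.insert_comm]
    exact closure_insert_closure_eq (by simp [Set.insert_subset_iff])
      (by simp [Set.insert_subset_iff, ha'])
  rw [← hX, ← hY]
  exact ⟨(closure_insert_inf_closure_insert_eq hnorm hsq hnorm' hsq' haa').symm,
    relIndex_closure_insert_eq_two hnorm hsq haN⟩

end Subgroup

section signStabilizer

variable {R M : Type*} [Ring R] [AddCommGroup M] [Module R M]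

def signStabilizer (v : M) : Subgroup (LinearMap.GeneralLinearGroup R M) where
  carrier := {g | g • v = v ∨ g • v = -v}
  one_mem' := Or.inl (one_smul _ v)
  mul_mem' := by
    rintro g h (hg | hg) (hh | hh) <;> simp [mul_smul, hg, hh]
  inv_mem' := by
    rintro g (hg | hg)
    · exact Or.inl (inv_smul_eq_iff.2 hg.symm)
    · exact Or.inr (inv_smul_eq_iff.2 (by rw [smul_neg, hg, neg_neg]))

theorem mem_signStabilizer_iff {v : M} {g : LinearMap.GeneralLinearGroup R M} :
    g ∈ signStabilizer v ↔ g.val v = v ∨ g.val v = -v :=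
  Iff.rfl

theorem neg_one_mem_signStabilizer (v : M) : -1 ∈ signStabilizer (R := R) v :=
  Or.inr (by simp)

end signStabilizer

theorem notMem_signStabilizer_one {R ι : Type*} [Ring R] [CharZero R]
    {g : LinearMap.GeneralLinearGroup R (ι → R)} {i j : ι} (hi : g.val 1 i = -1)
    (hj : g.val 1 j = 1) : g ∉ signStabilizer 1 := by
  rw [mem_signStabilizer_iff]
  rintro (h | h)
  · rw [h] at hi; norm_num at hi
  · rw [h] at hj; norm_num at hj

theorem eq_of_apply_f_eq {g h : LinearMap.GeneralLinearGroup ℝ (Fin 4 → ℝ)}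
    (H : ∀ i, g.val (f i) = h.val (f i)) : g = h :=
  Units.ext (LinearMap.pi_ext' fun i => LinearMap.ext_ring (H i))

theorem f_zero_add_f_one_add_f_two_add_f_three : f 0 + f 1 + f 2 + f 3 = 1 := by
  ext i; fin_cases i <;> simp [f]

/-- The subgroup `I₃ = ⟨cₓ, bₓ, −id⟩` of `GL(4,ℝ)` equals the intersection
`I₂ₓ ∩ I₂_y`, where `I₂ₓ = ⟨cₓ, aₓ, bₓ⟩` and `I₂_y = ⟨c_y, a_y, b_y⟩`; moreover
`I₃` has index 2 in `I₂ₓ`. -/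
theorem I3_eq_I2x_inter_I2y_and_index_two
    (cx ax bx negId cy ay by' : LinearMap.GeneralLinearGroup ℝ (Fin 4 → ℝ))
    (hcx1 : cx.val (f 0) = f 2) (hcx2 : cx.val (f 2) = f 0)
    (hcx3 : cx.val (f 1) = f 3) (hcx4 : cx.val (f 3) = f 1)
    (hax1 : ax.val (f 0) = f 1) (hax2 : ax.val (f 1) = -f 0)
    (hax3 : ax.val (f 2) = f 3) (hax4 : ax.val (f 3) = -f 2)
    (hbx1 : bx.val (f 0) = f 1) (hbx2 : bx.val (f 1) = f 0)
    (hbx3 : bx.val (f 2) = f 3) (hbx4 : bx.val (f 3) = f 2)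
    (hneg : ∀ i : Fin 4, negId.val (f i) = -f i)
    (hcy1 : cy.val (f 0) = f 1) (hcy2 : cy.val (f 1) = f 0)
    (hcy3 : cy.val (f 2) = f 3) (hcy4 : cy.val (f 3) = f 2)
    (hay1 : ay.val (f 0) = f 2) (hay2 : ay.val (f 2) = -f 0)
    (hay3 : ay.val (f 1) = f 3) (hay4 : ay.val (f 3) = -f 1)
    (hby1 : by'.val (f 0) = f 2) (hby2 : by'.val (f 2) = f 0)
    (hby3 : by'.val (f 1) = f 3) (hby4 : by'.val (f 3) = f 1) :
    Subgroup.closure ({cx, bx, negId} :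
        Set (LinearMap.GeneralLinearGroup ℝ (Fin 4 → ℝ))) =
      Subgroup.closure ({cx, ax, bx} :
          Set (LinearMap.GeneralLinearGroup ℝ (Fin 4 → ℝ))) ⊓
        Subgroup.closure ({cy, ay, by'} :
          Set (LinearMap.GeneralLinearGroup ℝ (Fin 4 → ℝ))) ∧
      (Subgroup.closure ({cx, bx, negId} :
          Set (LinearMap.GeneralLinearGroup ℝ (Fin 4 → ℝ)))).relIndex
        (Subgroup.closure ({cx, ax, bx} :
          Set (LinearMap.GeneralLinearGroup ℝ (Fin 4 → ℝ)))) = 2 := by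
  obtain rfl : negId = -1 := eq_of_apply_f_eq fun i => by simp [hneg]
  obtain rfl : bx = cy := eq_of_apply_f_eq fun i => by fin_cases i <;> simp [*]
  obtain rfl : cx = by' := eq_of_apply_f_eq fun i => by fin_cases i <;> simp [*]
  obtain ⟨hax_sq, hay_sq, hax_cx, hax_bx, hay_cx, hay_bx⟩ : ax * ax = -1 ∧ ay * ay = -1 ∧
      ax * cx = cx * ax ∧ ax * bx = -1 * bx * ax ∧ ay * cx = -1 * cx * ay ∧ ay * bx = bx * ay := by
    refine ⟨?_, ?_, ?_, ?_, ?_, ?_⟩ <;> refine eq_of_apply_f_eq fun i => ?_ <;>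
      fin_cases i <;> simp [*]
  set N := Subgroup.closure ({cx, bx, -1} : Set (LinearMap.GeneralLinearGroup ℝ (Fin 4 → ℝ)))
  have hN_sign : N ≤ signStabilizer 1 := by
    simp only [N, Subgroup.closure_le, Set.insert_subset_iff, Set.singleton_subset_iff]
    refine ⟨?_, ?_, neg_one_mem_signStabilizer 1⟩ <;> refine mem_signStabilizer_iff.2 (.inl ?_) <;>
      rw [← f_zero_add_f_one_add_f_two_add_f_three] <;> simp only [map_add, *] <;> abel
  have hax_notMem : ax ∉ N := fun h => by
    refine notMem_signStabilizer_one (i := 0) (j := 1) ?_ ?_ (hN_sign h) <;>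
      rw [← f_zero_add_f_one_add_f_two_add_f_three] <;> simp only [map_add, *] <;> simp [f]
  have haxay_notMem : ax * ay ∉ N := fun h => by
    refine notMem_signStabilizer_one (i := 1) (j := 0) ?_ ?_ (hN_sign h) <;>
      rw [← f_zero_add_f_one_add_f_two_add_f_three] <;>
      simp only [Units.val_mul, Module.End.mul_apply, map_add, map_neg, *] <;> simp [f]
  exact Subgroup.closure_eq_inf_and_relIndex_eq_two_of_relations hax_sq hax_cx hax_bx
    hay_sq hay_cx hay_bx hax_notMem haxay_notMem
end
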